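/- arXiv:math/0512336 — 2 statements merged into one kernel-verified Lean document; each statement's English description precedes it below -/
import Mathlib

section
/- Let Z be a real antisymmetric n×n matrix with tr(ZᵀZ) = 1, let ν ∈ ℝⁿ be a unit vector, and set Z₀ = (I − ννᵀ)·Z·(I − ννᵀ). Then for every real antisymmetric n×n matrix J with tr(JᵀJ) = 1 one has |tr(Zᵀ·(I − 2ννᵀ)·J)| ≤ √(tr(Z₀ᵀZ₀)). -/
/-!
Writing `P = ννᵀ`, antisymmetry of `Z` gives `νᵀ Z ν = 0`, hence `P Zᵀ P = 0`, so
`tr(Z₀ᵀ J) = tr(Zᵀ J) - tr(P Zᵀ J) - tr(Zᵀ P J)`. Antisymmetry of `Z` and `J` makes the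
two cross terms equal (transpose and cycle), so the left-hand side is `|tr(Z₀ᵀ J)|`, and
Cauchy–Schwarz for the Frobenius inner product bounds it by `‖Z₀‖ ‖J‖ = ‖Z₀‖`.
-/

open Matrix

namespace Matrix

variable {m n R : Type*} [Fintype n]

theorem sq_trace_transpose_mul_le [Fintype m] [CommRing R] [LinearOrder R]
    [IsStrictOrderedRing R]
    (A B : Matrix m n R) : (Aᵀ * B).trace ^ 2 ≤ (Aᵀ * A).trace * (Bᵀ * B).trace := by
  simp only [← vec_dotProduct_vec, dotProduct, ← sq]
  exact Finset.sum_mul_sq_le_sq_mul_sq _ _ _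

theorem dotProduct_mulVec_self_eq_zero [CommRing R] [NoZeroDivisors R] [CharZero R]
    {A : Matrix n n R} (hA : Aᵀ = -A) (v : n → R) : v ⬝ᵥ A *ᵥ v = 0 := by
  refine CharZero.eq_neg_self_iff.mp ?_
  calc v ⬝ᵥ A *ᵥ v = Aᵀ *ᵥ v ⬝ᵥ v := by rw [dotProduct_mulVec, mulVec_transpose]
    _ = -(v ⬝ᵥ A *ᵥ v) := by rw [hA, neg_mulVec, neg_dotProduct, dotProduct_comm]

theorem vecMulVec_mul_mul_vecMulVec [CommRing R] [Fintype m] {l p : Type*}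
    (u : l → R) (v : m → R) (A : Matrix m n R) (w : n → R) (x : p → R) :
    vecMulVec u v * A * vecMulVec w x = (v ⬝ᵥ A *ᵥ w) • vecMulVec u x := by
  rw [vecMulVec_mul, vecMulVec_mul_vecMulVec, ← dotProduct_mulVec, vecMulVec_smul]

theorem trace_mul_mul_swap_of_transpose_eq_neg [CommRing R] {A B P : Matrix n n R}
    (hA : Aᵀ = -A) (hB : Bᵀ = -B) (hP : Pᵀ = P) : (P * A * B).trace = (A * P * B).trace := by
  rw [← trace_transpose, transpose_mul, transpose_mul, hA, hB, hP, Matrix.neg_mul, Matrix.neg_mul,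
    Matrix.mul_neg, neg_neg, trace_mul_comm]

theorem trace_compress_mul [CommRing R] [DecidableEq n] {A B P : Matrix n n R}
    (hA : Aᵀ = -A) (hB : Bᵀ = -B) (hP : Pᵀ = P) (hPAP : P * A * P = 0) :
    ((1 - P) * A * (1 - P) * B).trace = (A * (1 - (2 : R) • P) * B).trace := by
  have hexpand : (1 - P) * A * (1 - P) * B = A * B - P * A * B - A * P * B + P * A * P * B := by
    noncomm_ring
  rw [hexpand, hPAP, zero_mul, add_zero, trace_sub, trace_sub,
    trace_mul_mul_swap_of_transpose_eq_neg hA hB hP, mul_sub, sub_mul, mul_one, Matrix.mul_smul,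
    Matrix.smul_mul, trace_sub, trace_smul, smul_eq_mul]
  ring

end Matrix

theorem stmt_7_general (n : ℕ) (Z J : Matrix (Fin n) (Fin n) ℝ) (ν : Fin n → ℝ)
    (hZ : Zᵀ = -Z)
    (hJ : Jᵀ = -J) (hJnorm : (Jᵀ * J).trace = 1) :
    let Z₀ : Matrix (Fin n) (Fin n) ℝ :=
      (1 - vecMulVec ν ν) * Z * (1 - vecMulVec ν ν)
    |(Zᵀ * (1 - (2 : ℝ) • vecMulVec ν ν) * J).trace| ≤ Real.sqrt ((Z₀ᵀ * Z₀).trace) := by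
  intro Z₀
  set P := vecMulVec ν ν
  have hP : Pᵀ = P := transpose_vecMulVec ν ν
  have hZt : Zᵀᵀ = -Zᵀ := by rw [transpose_transpose, hZ, neg_neg]
  have hPZP : P * Zᵀ * P = 0 := by
    rw [vecMulVec_mul_mul_vecMulVec, dotProduct_mulVec_self_eq_zero hZt, zero_smul]
  have hZ₀ : Z₀ᵀ = (1 - P) * Zᵀ * (1 - P) := by
    change ((1 - P) * Z * (1 - P))ᵀ = _
    rw [transpose_mul, transpose_mul, transpose_sub, transpose_one, hP, mul_assoc]
  rw [← trace_compress_mul hZt hJ hP hPZP, ← hZ₀]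
  refine Real.abs_le_sqrt ?_
  simpa [hJnorm] using sq_trace_transpose_mul_le Z₀ J

/-- Inequality (47) of the paper: for antisymmetric `Z`, `J` normalized in
Frobenius norm, a unit vector `ν`, and `Z₀ = (I − ννᵀ) Z (I − ννᵀ)`,
`|tr(Zᵀ (I − 2ννᵀ) J)| ≤ √(tr(Z₀ᵀ Z₀))`. -/
theorem stmt_7 (n : ℕ) (Z J : Matrix (Fin n) (Fin n) ℝ) (ν : Fin n → ℝ)
    (hZ : Zᵀ = -Z) (hZnorm : (Zᵀ * Z).trace = 1)
    (hν : ∑ i, ν i ^ 2 = 1)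
    (hJ : Jᵀ = -J) (hJnorm : (Jᵀ * J).trace = 1) :
    let Z₀ : Matrix (Fin n) (Fin n) ℝ :=
      (1 - vecMulVec ν ν) * Z * (1 - vecMulVec ν ν)
    |(Zᵀ * (1 - (2 : ℝ) • vecMulVec ν ν) * J).trace| ≤ Real.sqrt ((Z₀ᵀ * Z₀).trace) :=
  stmt_7_general n Z J ν hZ hJ hJnorm
end

section
/- Let Z be a real antisymmetric n×n matrix with tr(ZᵀZ) = 1, let ν ∈ ℝⁿ be a unit vector, and set Z₀ = (I − ννᵀ)·Z·(I − ννᵀ). If Z₀ ≠ 0, then the matrix J = Z₀ / √(tr(Z₀ᵀZ₀)) is antisymmetric with tr(JᵀJ) = 1 and attains the maximum: tr(Zᵀ·(I − 2ννᵀ)·J) = √(tr(Z₀ᵀZ₀)). -/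
open Matrix

/-- The maximum in inequality (47) of the paper is attained: if
`Z₀ = (I − ννᵀ) Z (I − ννᵀ) ≠ 0`, then `J = Z₀ / √(tr(Z₀ᵀ Z₀))` is
antisymmetric with `tr(Jᵀ J) = 1` and
`tr(Zᵀ (I − 2ννᵀ) J) = √(tr(Z₀ᵀ Z₀))`. -/
theorem stmt_8 (n : ℕ) (Z : Matrix (Fin n) (Fin n) ℝ) (ν : Fin n → ℝ)
    (hZ : Zᵀ = -Z) (hZnorm : (Zᵀ * Z).trace = 1)
    (hν : ∑ i, ν i ^ 2 = 1)
    (Z₀ : Matrix (Fin n) (Fin n) ℝ)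
    (hZ₀ : Z₀ = (1 - vecMulVec ν ν) * Z * (1 - vecMulVec ν ν))
    (hne : Z₀ ≠ 0) :
    let J : Matrix (Fin n) (Fin n) ℝ := (Real.sqrt ((Z₀ᵀ * Z₀).trace))⁻¹ • Z₀
    Jᵀ = -J ∧ (Jᵀ * J).trace = 1 ∧
      (Zᵀ * (1 - (2 : ℝ) • vecMulVec ν ν) * J).trace = Real.sqrt ((Z₀ᵀ * Z₀).trace) := by
  intro J
  set Q : Matrix (Fin n) (Fin n) ℝ := vecMulVec ν ν with hQ
  set P : Matrix (Fin n) (Fin n) ℝ := 1 - Q with hP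
  have hQQ : Q * Q = Q := by
    ext i j
    simp only [hQ, mul_apply, vecMulVec_apply]
    have : ∑ k, ν i * ν k * (ν k * ν j) = (ν i * ν j) * ∑ k, ν k ^ 2 := by
      rw [Finset.mul_sum]; apply Finset.sum_congr rfl; intros; ring
    rw [this, hν, mul_one]
  have hQT : Qᵀ = Q := by
    ext i j; simp [hQ, vecMulVec_apply, mul_comm]
  have hPT : Pᵀ = P := by
    simp [hP, transpose_sub, hQT]
  have hPP : P * P = P := by
    simp only [hP, sub_mul, mul_sub, one_mul, mul_one, hQQ]
    abel
  have hZ₀T : Z₀ᵀ = -Z₀ := by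
    rw [hZ₀, transpose_mul, transpose_mul, hPT, hZ]
    simp [Matrix.mul_neg, Matrix.neg_mul, Matrix.mul_assoc]
  -- positivity of s
  have hs_eq : (Z₀ᵀ * Z₀).trace = ∑ j, ∑ i, (Z₀ i j) ^ 2 := by
    simp only [trace, diag, mul_apply, transpose_apply]
    apply Finset.sum_congr rfl; intros j _
    apply Finset.sum_congr rfl; intros i _; ring
  have hspos : 0 < (Z₀ᵀ * Z₀).trace := by
    rw [hs_eq]
    have hnonneg : ∀ j ∈ Finset.univ, (0:ℝ) ≤ ∑ i, (Z₀ i j) ^ 2 := by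
      intro j _; positivity
    obtain ⟨i, j, hij⟩ : ∃ i j, Z₀ i j ≠ 0 := by
      by_contra h; push_neg at h; exact hne (by ext i j; simp [h])
    apply Finset.sum_pos' hnonneg
    refine ⟨j, Finset.mem_univ j, ?_⟩
    apply Finset.sum_pos' (fun i _ => by positivity)
    exact ⟨i, Finset.mem_univ i, by positivity⟩
  set s : ℝ := (Z₀ᵀ * Z₀).trace with hs
  have hsqrt_pos : 0 < Real.sqrt s := Real.sqrt_pos.mpr hspos
  have hQP : Q * P = 0 := by
    simp [hP, mul_sub, hQQ]
  have hkey : (1 - (2:ℝ) • Q) * Z₀ = Z₀ := by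
    rw [hZ₀, ← Matrix.mul_assoc, ← Matrix.mul_assoc]
    congr 1
    rw [sub_mul, smul_mul_assoc, hQP, smul_zero, sub_zero, one_mul]
  have e1 : Z₀ * Z₀ = P * (Z * (P * (Z * P))) := by
    rw [hZ₀]
    simp only [Matrix.mul_assoc]
    rw [show P * (P * (Z * P)) = P * (Z * P) from by rw [← Matrix.mul_assoc, hPP]]
  have e2 : (Z₀ * Z₀).trace = (Z * Z₀).trace := by
    rw [e1, trace_mul_comm, hZ₀]
    congr 1
    simp only [Matrix.mul_assoc]
    rw [show P * (Z * (P * P)) = P * (Z * P) from by rw [hPP]]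
  have htr : (Zᵀ * Z₀).trace = s := by
    have l : (Zᵀ * Z₀).trace = -(Z * Z₀).trace := by
      rw [hZ, Matrix.neg_mul, trace_neg]
    have r : s = -(Z₀ * Z₀).trace := by
      rw [hs]
      conv_lhs => rw [hZ₀T]
      rw [Matrix.neg_mul, trace_neg]
    rw [l, r, e2]
  refine ⟨?_, ?_, ?_⟩
  · show ((Real.sqrt s)⁻¹ • Z₀)ᵀ = -((Real.sqrt s)⁻¹ • Z₀)
    rw [transpose_smul, hZ₀T, smul_neg]
  · show (((Real.sqrt s)⁻¹ • Z₀)ᵀ * ((Real.sqrt s)⁻¹ • Z₀)).trace = 1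
    rw [transpose_smul, Matrix.smul_mul, Matrix.mul_smul, smul_smul, trace_smul, smul_eq_mul,
      ← hs]
    field_simp
    rw [Real.sq_sqrt hspos.le]
  · show (Zᵀ * (1 - (2:ℝ) • Q) * ((Real.sqrt s)⁻¹ • Z₀)).trace = Real.sqrt s
    rw [Matrix.mul_smul, trace_smul, Matrix.mul_assoc, hkey, htr, smul_eq_mul]
    rw [show s = Real.sqrt s * Real.sqrt s from (Real.mul_self_sqrt hspos.le).symm]
    field_simp
    rw [Real.sqrt_sq hsqrt_pos.le]
end
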